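/- arXiv:1407.1822 — 2 statements merged into one kernel-verified Lean document; each statement's English description precedes it below -/
import Mathlib

section
/- Let a < 0 < x, c > 1, ε > 0 with x < 1 − ε and a·c < x, and let f : (a,1) → ℝ be differentiable with derivative bounded on every compact subinterval of (a,1). Then ∫_x^{1−ε} t·H_{w3}(x/t)·f(t)/((x−c·t)·√(t·(t−a))) dt = (x/c)·∫_x^{1−ε} H_{w3}(x/t)·f(t)/((x−c·t)·√(t·(t−a))) dt − (1/c)·∫_x^{1−ε} (1/t)·( ∫_t^{1−ε} f(u)/√((u−a)(u−t)) du ) dt. -/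
/-- The weight-one iterated integral `H_{w₃}(y) = ∫_y^1 dt/(t·√(1-t))`. -/
noncomputable def Hw3 (y : ℝ) : ℝ := ∫ t in y..1, (t * Real.sqrt (1 - t))⁻¹

/-!
Since `t / (x - c t) = (x / c) / (x - c t) - 1 / c`, it suffices to show, with `b = 1 - ε`,
that `∫_x^b Hw3(x/t) f(t) / √(t (t - a)) dt` equals
`∫_x^b t⁻¹ ∫_t^b f(u) / √((u - a)(u - t)) du dt`.
Scaling `t = s / u` gives `Hw3(x/u) = √u ∫_x^u ds / (s √(u - s))`, so both sides are iterated
integrals of `s⁻¹ f(u) / √((u - a)(u - s))` over the triangle `x < s < u < b`, in the two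
orders. Fubini applies because the kernel is bounded by a multiple of `(u - s)^(-1/2)`, whose
slices have integral `2 √(b - s)`.
-/

open Real MeasureTheory Set intervalIntegral Function

theorem intervalIntegral.integral_eq_setIntegral_Ioo {E : Type*} [NormedAddCommGroup E]
    [NormedSpace ℝ E] {f : ℝ → E} {a b : ℝ} (h : a ≤ b) :
    ∫ t in a..b, f t = ∫ t in Ioo a b, f t := by
  rw [integral_of_le h, integral_Ioc_eq_integral_Ioo]

def triangle (x b : ℝ) : Set (ℝ × ℝ) := {p | x < p.1 ∧ p.1 < p.2 ∧ p.2 < b}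

section Triangle

variable {E : Type*} [NormedAddCommGroup E] {x b : ℝ} {K : ℝ → ℝ → E}

theorem measurableSet_triangle : MeasurableSet (triangle x b) :=
  ((isOpen_lt continuous_const continuous_fst).inter
    ((isOpen_lt continuous_fst continuous_snd).inter
      (isOpen_lt continuous_snd continuous_const))).measurableSet

theorem indicator_triangle_apply (s u : ℝ) :
    (triangle x b).indicator (uncurry K) (s, u) =
      (Ioo x b).indicator (fun s => (Ioo s b).indicator (K s) u) s := by
  simp only [indicator_apply, triangle, mem_Ioo, uncurry_apply_pair]
  split_ifs <;> grind

theorem indicator_triangle_apply' (s u : ℝ) :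
    (triangle x b).indicator (uncurry K) (s, u) =
      (Ioo x b).indicator (fun u => (Ioo x u).indicator (fun s => K s u) s) u := by
  simp only [indicator_apply, triangle, mem_Ioo, uncurry_apply_pair]
  split_ifs <;> grind

theorem integrableOn_triangle
    (hK : AEStronglyMeasurable (uncurry K) (volume.restrict (triangle x b)))
    (hslice : ∀ s ∈ Ioo x b, IntegrableOn (K s) (Ioo s b))
    (hnorm : IntegrableOn (fun s => ∫ u in Ioo s b, ‖K s u‖) (Ioo x b)) :
    IntegrableOn (uncurry K) (triangle x b) := by
  have hG := (aestronglyMeasurable_indicator_iff measurableSet_triangle).2 hK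
  rw [← integrable_indicator_iff measurableSet_triangle, Measure.volume_eq_prod]
  rw [Measure.volume_eq_prod] at hG
  refine (integrable_prod_iff hG).2 ⟨.of_forall fun s => ?_, ?_⟩
  · simp only [indicator_triangle_apply]
    by_cases hs : s ∈ Ioo x b
    · simpa [hs] using (integrable_indicator_iff measurableSet_Ioo).2 (hslice s hs)
    · simp [hs]
  · refine ((integrable_indicator_iff measurableSet_Ioo).2 hnorm).congr (.of_forall fun s => ?_)
    simp only [indicator_triangle_apply]
    by_cases hs : s ∈ Ioo x b
    · simp [hs, norm_indicator_eq_indicator_norm,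
        MeasureTheory.integral_indicator measurableSet_Ioo]
    · simp [hs]

theorem integral_integral_swap_triangle [NormedSpace ℝ E] (hxb : x ≤ b)
    (hK : IntegrableOn (uncurry K) (triangle x b)) :
    ∫ s in x..b, ∫ u in s..b, K s u = ∫ u in x..b, ∫ s in x..u, K s u := by
  have hG := hK.integrable_indicator measurableSet_triangle
  rw [Measure.volume_eq_prod] at hG
  have hleft (s : ℝ) : ∫ u, (triangle x b).indicator (uncurry K) (s, u) =
      (Ioo x b).indicator (fun s => ∫ u in s..b, K s u) s := by
    simp only [indicator_triangle_apply]
    by_cases hs : s ∈ Ioo x b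
    · simp [hs, MeasureTheory.integral_indicator measurableSet_Ioo,
        integral_eq_setIntegral_Ioo hs.2.le]
    · simp [hs]
  have hright (u : ℝ) : ∫ s, (triangle x b).indicator (uncurry K) (s, u) =
      (Ioo x b).indicator (fun u => ∫ s in x..u, K s u) u := by
    simp only [indicator_triangle_apply']
    by_cases hu : u ∈ Ioo x b
    · simp [hu, MeasureTheory.integral_indicator measurableSet_Ioo,
        integral_eq_setIntegral_Ioo hu.1.le]
    · simp [hu]
  rw [integral_eq_setIntegral_Ioo hxb, integral_eq_setIntegral_Ioo hxb,
    ← MeasureTheory.integral_indicator measurableSet_Ioo,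
    ← MeasureTheory.integral_indicator measurableSet_Ioo]
  simpa only [hleft, hright] using
    integral_integral_swap (f := fun s u => (triangle x b).indicator (uncurry K) (s, u)) hG

end Triangle

theorem hasDerivAt_two_mul_sqrt_sub {s u : ℝ} (h : s < u) :
    HasDerivAt (fun v => 2 * √(v - s)) (√(u - s))⁻¹ u := by
  refine ((((hasDerivAt_id' u).sub_const s).sqrt (sub_pos.2 h).ne').const_mul 2).congr_deriv ?_
  field_simp

theorem intervalIntegrable_inv_sqrt_sub {s b : ℝ} (h : s ≤ b) :
    IntervalIntegrable (fun u => (√(u - s))⁻¹) volume s b :=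
  (intervalIntegrable_iff_integrableOn_Ioc_of_le h).2 <|
    integrableOn_deriv_of_nonneg (by fun_prop) (fun _ hu => hasDerivAt_two_mul_sqrt_sub hu.1)
      fun _ _ => by positivity

theorem integral_inv_sqrt_sub {s b : ℝ} (h : s ≤ b) :
    ∫ u in s..b, (√(u - s))⁻¹ = 2 * √(b - s) := by
  rw [intervalIntegral.integral_eq_sub_of_hasDeriv_right_of_le h (by fun_prop)
    (fun _ hu => (hasDerivAt_two_mul_sqrt_sub hu.1).hasDerivWithinAt)
    (intervalIntegrable_inv_sqrt_sub h)]
  simp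

theorem integrableOn_inv_sqrt_sub_triangle {x b : ℝ} :
    IntegrableOn (fun p : ℝ × ℝ => (√(p.2 - p.1))⁻¹) (triangle x b) := by
  refine integrableOn_triangle (K := fun s u => (√(u - s))⁻¹)
    (by fun_prop : Measurable _).aestronglyMeasurable
    (fun s hs => (intervalIntegrable_iff_integrableOn_Ioo_of_le hs.2.le).1
      (intervalIntegrable_inv_sqrt_sub hs.2.le)) ?_
  refine ((by fun_prop : Continuous fun s => 2 * √(b - s)).integrableOn_Icc.mono_set
    Ioo_subset_Icc_self).congr_fun (fun s hs => ?_) measurableSet_Ioo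
  simp only [norm_inv, norm_of_nonneg (sqrt_nonneg _)]
  rw [← integral_eq_setIntegral_Ioo hs.2.le, integral_inv_sqrt_sub hs.2.le]

theorem intervalIntegrable_inv_mul_sqrt_one_sub {y : ℝ} (hy : 0 < y) (hy1 : y ≤ 1) :
    IntervalIntegrable (fun t => (t * √(1 - t))⁻¹) volume y 1 := by
  have h := ((intervalIntegrable_inv_sqrt_sub (sub_nonneg.2 hy1)).comp_sub_left 1).symm
  simp only [sub_zero, sub_sub_cancel] at h
  have hinv : ContinuousOn (fun t : ℝ => t⁻¹) (uIcc y 1) :=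
    continuousOn_inv₀.mono fun t ht => (hy.trans_le (uIcc_of_le hy1 ▸ ht).1).ne'
  simpa only [mul_inv] using h.continuousOn_mul hinv

theorem continuousOn_Hw3 : ContinuousOn Hw3 (Ioc 0 1) := by
  intro y hy
  have hIcc : ContinuousOn Hw3 (Icc (y / 2) 1) := by
    rw [← uIcc_of_le (by linarith [hy.2])]
    exact continuousOn_primitive_interval_left <| (intervalIntegrable_iff').1 <|
      intervalIntegrable_inv_mul_sqrt_one_sub (by linarith [hy.1]) (by linarith [hy.2])
  refine (hIcc y ⟨by linarith [hy.1], hy.2⟩).mono_of_mem_nhdsWithin <| mem_nhdsWithin.2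
    ⟨Ioi (y / 2), isOpen_Ioi, half_lt_self hy.1, fun z hz => ⟨hz.1.le, hz.2.2⟩⟩

theorem continuousOn_Hw3_div {x : ℝ} (hx : 0 < x) :
    ContinuousOn (fun t => Hw3 (x / t)) (Ici x) :=
  continuousOn_Hw3.comp (continuousOn_const.div continuousOn_id fun _ ht =>
    (hx.trans_le ht).ne') fun _ ht =>
      ⟨div_pos hx (hx.trans_le ht), (div_le_one (hx.trans_le ht)).2 ht⟩

theorem Hw3_div_eq {x u : ℝ} (hx : 0 < x) (hxu : x ≤ u) :
    Hw3 (x / u) = √u * ∫ s in x..u, (s * √(u - s))⁻¹ := by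
  have hu : 0 < u := hx.trans_le hxu
  have hscale :
      ∀ s ∈ uIcc x u, (s / u * √(1 - s / u))⁻¹ = u * √u * (s * √(u - s))⁻¹ := by
    intro s _
    have hsqrt : √(1 - s / u) = √(u - s) / √u := by
      rw [← sqrt_div' _ hu.le, sub_div, div_self hu.ne']
    rw [hsqrt]
    field_simp
  have hlimits : Hw3 (x / u) = ∫ t in x / u..u / u, (t * √(1 - t))⁻¹ := by
    rw [div_self hu.ne', Hw3]
  rw [hlimits, ← inv_smul_integral_comp_div, integral_congr hscale,
    intervalIntegral.integral_const_mul, smul_eq_mul]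
  field_simp

theorem integrableOn_inv_mul_div_sqrt_triangle {a x b : ℝ} (hax : a < x) (hx : 0 < x)
    {f : ℝ → ℝ} (hf : ContinuousOn f (Icc x b)) :
    IntegrableOn (uncurry fun s u => s⁻¹ * (f u / √((u - a) * (u - s)))) (triangle x b) := by
  obtain ⟨M, hM⟩ := isCompact_Icc.exists_bound_of_continuousOn hf
  have hsnd : MapsTo Prod.snd (triangle x b) (Icc x b) :=
    fun p hp => ⟨(hp.1.trans hp.2.1).le, hp.2.2.le⟩
  have hcont : ContinuousOn
      (fun p : ℝ × ℝ => p.1⁻¹ * (f p.2 / √((p.2 - a) * (p.2 - p.1)))) (triangle x b) := by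
    refine (continuousOn_fst.inv₀ fun p hp => (hx.trans hp.1).ne').mul
      ((hf.comp continuousOn_snd hsnd).div (by fun_prop) fun p hp => ?_)
    exact (sqrt_pos.2 (mul_pos (by linarith [(hsnd hp).1]) (sub_pos.2 hp.2.1))).ne'
  refine (integrableOn_inv_sqrt_sub_triangle.const_mul (x⁻¹ * M * (√(x - a))⁻¹)).mono'
    (hcont.aestronglyMeasurable measurableSet_triangle)
    ((ae_restrict_iff' measurableSet_triangle).2 (.of_forall fun p hp => ?_))
  have hfu : ‖f p.2‖ ≤ M := hM _ (hsnd hp)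
  obtain ⟨s, u⟩ := p
  obtain ⟨hxs, hsu, -⟩ := hp
  have hs : 0 < s := hx.trans hxs
  simp only [uncurry_apply_pair]
  rw [sqrt_mul (by linarith), norm_mul, norm_div, norm_mul, norm_inv, norm_of_nonneg hs.le,
    norm_of_nonneg (sqrt_nonneg _), norm_of_nonneg (sqrt_nonneg _), div_eq_mul_inv, mul_inv]
  have hM0 : 0 ≤ M := (norm_nonneg _).trans hfu
  have hsx : s⁻¹ ≤ x⁻¹ := inv_anti₀ hx hxs.le
  have hua : (√(u - a))⁻¹ ≤ (√(x - a))⁻¹ :=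
    inv_anti₀ (sqrt_pos.2 (sub_pos.2 hax)) (sqrt_le_sqrt (by linarith))
  calc s⁻¹ * (‖f u‖ * ((√(u - a))⁻¹ * (√(u - s))⁻¹))
      = s⁻¹ * ‖f u‖ * (√(u - a))⁻¹ * (√(u - s))⁻¹ := by ring
    _ ≤ x⁻¹ * M * (√(x - a))⁻¹ * (√(u - s))⁻¹ := by gcongr

theorem integral_Hw3_div_mul_eq_integral_integral {a x b : ℝ} (hax : a < x) (hx : 0 < x)
    (hxb : x ≤ b) {f : ℝ → ℝ} (hf : ContinuousOn f (Icc x b)) :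
    ∫ t in x..b, Hw3 (x / t) * f t / √(t * (t - a)) =
      ∫ t in x..b, t⁻¹ * ∫ u in t..b, f u / √((u - a) * (u - t)) := by
  simp only [← intervalIntegral.integral_const_mul]
  rw [integral_integral_swap_triangle hxb (integrableOn_inv_mul_div_sqrt_triangle hax hx hf)]
  refine integral_congr fun u hu => ?_
  rw [uIcc_of_le hxb] at hu
  have hu0 : 0 < u := hx.trans_le hu.1
  have hua : 0 < u - a := by linarith [hu.1]
  have hkernel : ∀ s ∈ uIcc x u, s⁻¹ * (f u / √((u - a) * (u - s))) =
      f u / √(u - a) * (s * √(u - s))⁻¹ := by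
    intro s _
    rw [sqrt_mul hua.le, mul_inv, div_mul_eq_div_div, div_eq_mul_inv, div_eq_mul_inv]
    ring
  rw [integral_congr hkernel, intervalIntegral.integral_const_mul, Hw3_div_eq hx hu.1,
    sqrt_mul hu0.le]
  have : 0 < √u := sqrt_pos.2 hu0
  have : 0 < √(u - a) := sqrt_pos.2 hua
  field_simp

theorem stmt_5_general (a c x ε : ℝ) (ha : a < 0) (hx0 : 0 < x) (hc : 1 < c)
    (hε0 : 0 < ε) (hx1 : x < 1 - ε) (f : ℝ → ℝ)
    (hdiff : ∀ t ∈ Set.Ioo a 1, DifferentiableAt ℝ f t) :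
    (∫ t in x..(1 - ε),
        t * Hw3 (x / t) * f t / ((x - c * t) * Real.sqrt (t * (t - a)))) =
      (x / c) * (∫ t in x..(1 - ε),
          Hw3 (x / t) * f t / ((x - c * t) * Real.sqrt (t * (t - a))))
        - (1 / c) * ∫ t in x..(1 - ε),
            t⁻¹ * ∫ u in t..(1 - ε), f u / Real.sqrt ((u - a) * (u - t)) := by
  have hax : a < x := ha.trans hx0
  have hf : ContinuousOn f (Icc x (1 - ε)) := fun t ht =>
    (hdiff t ⟨hax.trans_le ht.1, by linarith [ht.2]⟩).continuousAt.continuousWithinAt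
  have hH : ContinuousOn (fun t => Hw3 (x / t)) (Icc x (1 - ε)) :=
    (continuousOn_Hw3_div hx0).mono Icc_subset_Ici_self
  have hS : ∀ t ∈ Icc x (1 - ε), √(t * (t - a)) ≠ 0 := fun t ht =>
    (sqrt_pos.2 (mul_pos (hx0.trans_le ht.1) (by linarith [ht.1]))).ne'
  have hD : ∀ t ∈ Icc x (1 - ε), x - c * t ≠ 0 := fun t ht =>
    (sub_neg.2 (by nlinarith [ht.1] : x < c * t)).ne
  have hsplit : ∀ t ∈ uIcc x (1 - ε),
      t * Hw3 (x / t) * f t / ((x - c * t) * √(t * (t - a))) =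
        x / c * (Hw3 (x / t) * f t / ((x - c * t) * √(t * (t - a)))) -
          1 / c * (Hw3 (x / t) * f t / √(t * (t - a))) := by
    intro t ht
    rw [uIcc_of_le hx1.le] at ht
    have : x - t * c ≠ 0 := mul_comm c t ▸ hD t ht
    have := hS t ht
    have : c ≠ 0 := by positivity
    field_simp
    ring
  have hA : ContinuousOn (fun t => Hw3 (x / t) * f t / √(t * (t - a))) (Icc x (1 - ε)) :=
    (hH.mul hf).div (by fun_prop) hS
  have hB : ContinuousOn (fun t => Hw3 (x / t) * f t / ((x - c * t) * √(t * (t - a))))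
      (Icc x (1 - ε)) :=
    (hH.mul hf).div (by fun_prop) fun t ht => mul_ne_zero (hD t ht) (hS t ht)
  rw [integral_congr hsplit,
    integral_sub ((hB.intervalIntegrable_of_Icc hx1.le).const_mul _)
      ((hA.intervalIntegrable_of_Icc hx1.le).const_mul _),
    intervalIntegral.integral_const_mul, intervalIntegral.integral_const_mul,
    integral_Hw3_div_mul_eq_integral_integral hax hx0 hx1.le hf]

/-- Lemma 4.6 / Eq. (4.10) (Convolution41ii): for `a < 0 < x`, `c > 1`, `ε > 0`,
`x < 1 - ε`, `a·c < x`, and `f` differentiable on `(a,1)` with locally bounded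
derivative,
`∫_x^{1-ε} t·H_{w₃}(x/t)·f(t)/((x-ct)·√(t(t-a))) dt
  = (x/c)·∫_x^{1-ε} H_{w₃}(x/t)·f(t)/((x-ct)·√(t(t-a))) dt
    - (1/c)·∫_x^{1-ε} (1/t)·∫_t^{1-ε} f(u)/√((u-a)(u-t)) du dt`. -/
theorem stmt_5 (a c x ε : ℝ) (ha : a < 0) (hx0 : 0 < x) (hc : 1 < c)
    (hε0 : 0 < ε) (hx1 : x < 1 - ε) (hac : a * c < x) (f : ℝ → ℝ)
    (hdiff : ∀ t ∈ Set.Ioo a 1, DifferentiableAt ℝ f t)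
    (hbdd : ∀ p q : ℝ, a < p → q < 1 →
      ∃ M : ℝ, ∀ t ∈ Set.Icc p q, |deriv f t| ≤ M) :
    (∫ t in x..(1 - ε),
        t * Hw3 (x / t) * f t / ((x - c * t) * Real.sqrt (t * (t - a)))) =
      (x / c) * (∫ t in x..(1 - ε),
          Hw3 (x / t) * f t / ((x - c * t) * Real.sqrt (t * (t - a))))
        - (1 / c) * ∫ t in x..(1 - ε),
            t⁻¹ * ∫ u in t..(1 - ε), f u / Real.sqrt ((u - a) * (u - t)) :=
  stmt_5_general a c x ε ha hx0 hc hε0 hx1 f hdiff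
end

section
/- Let a < 0 and let f : (0,1) → ℝ be continuously differentiable. Fix ε ∈ (0,1) and assume that x ↦ f(x) and x ↦ x^{3/2}·√(x−a)·f′(x) are Lebesgue integrable on (0, 1−ε). Then for every natural number N: ∫_0^{1−ε} x^N·√(x/(x−a))·f(x) dx = (1/2)·(a/4)^N·C(2(N+1),N+1) · ( ∫_0^{1−ε} √(x/(x−a))·f(x) dx + Σ_{i=1}^{N} ( (4/a)^i / ((2i+1)·C(2i,i)) ) · ( √(1−a−ε)·(1−ε)^{i+1/2}·f(1−ε) − ∫_0^{1−ε} x^i·√(x·(x−a))·f′(x) dx ) ). -/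
/-!
Write `S(x) = √(x/(x-a))`, `M(x) = √(x(x-a))` and `I_j = ∫₀^b x^j S f`. Since `S M = x` and
`(M²)' = 2x - a`, the function `G_j(x) = x^{j+1} M(x) f(x)` has derivative
`(j+2) x^{j+1} S f - a(2j+3)/2 · x^j S f + x^{j+1} M f'`, which is integrable on `(0, b)`.
Hence `G_j` has a limit at `0⁺`; writing `G_j(x) = x · (x^j M f)(x)` with the second factor
integrable, that limit must be `0` (otherwise `1/x` would be integrable near `0`). This gives
the recurrence `(j+2) I_{j+1} - a(2j+3)/2 · I_j = G_j(b) - ∫₀^b x^{j+1} M f'`, and solving it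
with `(n+1) C(2n+2, n+1) = 2(2n+1) C(2n, n)` yields the closed form.
-/

open Real MeasureTheory Set Filter Topology

theorem tendsto_nhdsGT_of_hasDerivAt_of_intervalIntegrable {G D : ℝ → ℝ} {a b : ℝ}
    (hab : a < b) (hderiv : ∀ x ∈ Ioc a b, HasDerivAt G (D x) x)
    (hint : IntervalIntegrable D volume a b) :
    Tendsto G (𝓝[>] a) (𝓝 (G b - ∫ x in a..b, D x)) := by
  have hprim : Tendsto (fun u => ∫ x in u..b, D x) (𝓝[>] a) (𝓝 (∫ x in a..b, D x)) := by
    have hcont := intervalIntegral.continuousOn_primitive_interval_left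
      ((intervalIntegrable_iff' (μ := volume)).1 hint)
    rw [uIcc_of_le hab.le] at hcont
    rw [← nhdsWithin_Ioc_eq_nhdsGT hab]
    exact (hcont a (left_mem_Icc.2 hab.le)).mono_left (nhdsWithin_mono _ Ioc_subset_Icc_self)
  refine (tendsto_const_nhds.sub hprim).congr' ?_
  filter_upwards [Ioo_mem_nhdsGT hab] with u hu
  have hsub : uIcc u b ⊆ Ioc a b := by
    rw [uIcc_of_le hu.2.le]
    exact Icc_subset_Ioc_iff hu.2.le |>.2 ⟨hu.1, le_rfl⟩
  rw [intervalIntegral.integral_eq_sub_of_hasDerivAt (fun x hx => hderiv x (hsub hx))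
    (hint.mono_set (by rw [uIcc_of_le hab.le]; exact hsub.trans Ioc_subset_Icc_self))]
  ring

theorem eq_zero_of_tendsto_mul_of_intervalIntegrable {g : ℝ → ℝ} {b L : ℝ} (hb : 0 < b)
    (hg : IntervalIntegrable g volume 0 b) (hL : Tendsto (fun x => x * g x) (𝓝[>] 0) (𝓝 L)) :
    L = 0 := by
  by_contra hL0
  have hpos : 0 < |L| := abs_pos.2 hL0
  obtain ⟨c, hc, hbound⟩ := mem_nhdsGT_iff_exists_Ioo_subset.1
    ((hL.abs.eventually_const_le (half_lt_self hpos)).and (Ioo_mem_nhdsGT hb))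
  set d := min (c / 2) b
  have hd : 0 < d := lt_min (half_pos hc) hb
  -- `|x g(x)| ≥ |L|/2` near `0` would make `x⁻¹` integrable there
  have hinv : IntervalIntegrable (fun x : ℝ => x⁻¹) volume 0 d := by
    refine ((hg.norm.mono_set ?_).const_mul (2 / |L|)).mono_fun' (by fun_prop) ?_
    · rw [uIcc_of_le hd.le, uIcc_of_le hb.le]
      exact Icc_subset_Icc_right (min_le_right _ _)
    · rw [uIoc_of_le hd.le]
      refine ae_restrict_of_forall_mem measurableSet_Ioc fun x hx => ?_
      have hxc : x ∈ Ioo 0 c :=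
        ⟨hx.1, hx.2.trans_lt ((min_le_left _ _).trans_lt (half_lt_self hc))⟩
      have hx := (hbound hxc).1
      simp only [abs_mul, abs_of_pos hxc.1] at hx
      simp only [norm_inv, Real.norm_of_nonneg hxc.1.le, Real.norm_eq_abs]
      rw [inv_le_iff_one_le_mul₀' hxc.1]
      field_simp
      linarith
  simp [intervalIntegrable_inv_iff, hd.ne] at hinv

theorem eq_centralBinom_mul_of_recurrence {a : ℝ} (ha : a ≠ 0) (I R : ℕ → ℝ)
    (hrec : ∀ j : ℕ, (j + 2) * I (j + 1) - a * (2 * j + 3) / 2 * I j = R (j + 1)) (N : ℕ) :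
    I N = 1 / 2 * (a / 4) ^ N * ((2 * (N + 1)).choose (N + 1) : ℝ) *
      (I 0 + ∑ i ∈ Finset.Icc 1 N,
        (4 / a) ^ i / ((2 * (i : ℝ) + 1) * ((2 * i).choose i : ℝ)) * R i) := by
  induction N with
  | zero => norm_num
  | succ N ih =>
    rw [Finset.sum_Icc_succ_top (by omega), ← add_assoc]
    set S := I 0 + ∑ i ∈ Finset.Icc 1 N,
      (4 / a) ^ i / ((2 * (i : ℝ) + 1) * ((2 * i).choose i : ℝ)) * R i
    set c := ((2 * (N + 1)).choose (N + 1) : ℝ)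
    have hC := congrArg (Nat.cast (R := ℝ)) (Nat.succ_mul_centralBinom_succ (N + 1))
    push_cast [Nat.centralBinom] at hC
    have hc : c ≠ 0 := Nat.cast_ne_zero.2 (Nat.centralBinom_ne_zero (N + 1))
    have hpow : (a / 4) ^ (N + 1) * (4 / a) ^ (N + 1) = 1 := by
      rw [← mul_pow, div_mul_div_comm, mul_comm a, div_self (mul_ne_zero four_ne_zero ha),
        one_pow]
    set t := (4 / a) ^ (N + 1) / ((2 * ((N + 1 : ℕ) : ℝ) + 1) * c)
    have ht : (2 * ((N : ℝ) + 1) + 1) * c * t = (4 / a) ^ (N + 1) := by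
      simp only [t]
      push_cast
      field_simp
    have hrecN := hrec N
    rw [ih] at hrecN
    apply mul_left_cancel₀ (show (N : ℝ) + 2 ≠ 0 by positivity)
    linear_combination hrecN - (1 / 2 * (a / 4) ^ (N + 1) * (S + t * R (N + 1))) * hC
      - (a / 4) ^ (N + 1) * R (N + 1) * ht - R (N + 1) * hpow

lemma sqrt_div_sub_eq_div_sqrt_mul_sub {a x : ℝ} (hx : 0 < x) (hxa : 0 < x - a) :
    √(x / (x - a)) = x / √(x * (x - a)) := by
  rw [eq_div_iff (by positivity), ← sqrt_mul (by positivity),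
    show x / (x - a) * (x * (x - a)) = x ^ 2 by field_simp, sqrt_sq hx.le]

lemma hasDerivAt_pow_succ_mul_sqrt_mul_sub_mul {a x : ℝ} {f : ℝ → ℝ} (j : ℕ) (hx : 0 < x)
    (hxa : 0 < x - a) (hf : DifferentiableAt ℝ f x) :
    HasDerivAt (fun y => y ^ (j + 1) * √(y * (y - a)) * f y)
      ((j + 2) * (x ^ (j + 1) * √(x / (x - a)) * f x)
        - a * (2 * j + 3) / 2 * (x ^ j * √(x / (x - a)) * f x)
        + x ^ (j + 1) * √(x * (x - a)) * deriv f x) x := by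
  have hM := ((hasDerivAt_id' x).mul ((hasDerivAt_id' x).sub_const a)).sqrt
    (mul_pos hx hxa).ne'
  refine (((hasDerivAt_pow (j + 1) x).mul hM).mul hf.hasDerivAt).congr_deriv ?_
  simp only [Pi.mul_apply]
  have hM2 : √(x * (x - a)) ^ 2 = x * (x - a) := sq_sqrt (by positivity)
  have hM0 : √(x * (x - a)) ≠ 0 := by positivity
  rw [sqrt_div_sub_eq_div_sqrt_mul_sub hx hxa]
  field_simp
  push_cast
  linear_combination (f x * x ^ j * (2 * (j : ℝ) + 2)) * hM2

lemma pow_mul_sqrt_mul_sub_eq_sqrt_sub_mul_rpow {a b : ℝ} (hb : 0 < b) (n : ℕ) :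
    b ^ n * √(b * (b - a)) = √(b - a) * b ^ ((n : ℝ) + 1 / 2) := by
  rw [rpow_add hb, rpow_natCast, ← sqrt_eq_rpow, sqrt_mul hb.le]
  ring

theorem integral_pow_mul_sqrt_div_sub_recurrence {a b : ℝ} {f : ℝ → ℝ} (ha : a < 0)
    (hb : 0 < b) (hdiff : ∀ x ∈ Ioc 0 b, DifferentiableAt ℝ f x)
    (hf : IntervalIntegrable f volume 0 b)
    (hf' : IntervalIntegrable (fun x => x ^ ((3 : ℝ) / 2) * √(x - a) * deriv f x) volume 0 b)
    (j : ℕ) :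
    (j + 2) * (∫ x in 0..b, x ^ (j + 1) * √(x / (x - a)) * f x)
      - a * (2 * j + 3) / 2 * (∫ x in 0..b, x ^ j * √(x / (x - a)) * f x)
      + (∫ x in 0..b, x ^ (j + 1) * √(x * (x - a)) * deriv f x)
      = b ^ (j + 1) * √(b * (b - a)) * f b := by
  have hI (i : ℕ) : IntervalIntegrable (fun x => x ^ i * √(x / (x - a)) * f x) volume 0 b := by
    refine hf.continuousOn_mul ?_
    rw [uIcc_of_le hb.le]
    fun_prop (disch := intro x hx; linarith [hx.1])
  have hJ : IntervalIntegrable (fun x => x ^ (j + 1) * √(x * (x - a)) * deriv f x)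
      volume 0 b := by
    refine (hf'.continuousOn_mul (continuousOn_pow j)).congr fun x hx => ?_
    rw [uIoc_of_le hb.le] at hx
    have h32 : x ^ ((3 : ℝ) / 2) = x * √x := by
      rw [show (3 : ℝ) / 2 = 1 + 1 / 2 by norm_num, rpow_add hx.1, rpow_one, ← sqrt_eq_rpow]
    simp only [h32, sqrt_mul hx.1.le]
    ring
  have hG : IntervalIntegrable (fun x => x ^ j * √(x * (x - a)) * f x) volume 0 b :=
    hf.continuousOn_mul (by fun_prop)
  have hlim := tendsto_nhdsGT_of_hasDerivAt_of_intervalIntegrable hb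
    (fun x hx => hasDerivAt_pow_succ_mul_sqrt_mul_sub_mul j hx.1 (by linarith [hx.1])
      (hdiff x hx))
    ((((hI (j + 1)).const_mul _).sub ((hI j).const_mul _)).add hJ)
  have hlim_zero := eq_zero_of_tendsto_mul_of_intervalIntegrable hb hG
    (hlim.congr fun x => by ring)
  rw [intervalIntegral.integral_add (((hI (j + 1)).const_mul _).sub ((hI j).const_mul _)) hJ,
    intervalIntegral.integral_sub ((hI (j + 1)).const_mul _) ((hI j).const_mul _),
    intervalIntegral.integral_const_mul, intervalIntegral.integral_const_mul] at hlim_zero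
  linarith

theorem stmt_16_general (a : ℝ) (ha : a < 0) (f : ℝ → ℝ)
    (hdiff : ∀ t ∈ Set.Ioo (0 : ℝ) 1, DifferentiableAt ℝ f t)
    (ε : ℝ) (hε0 : 0 < ε) (hε1 : ε < 1)
    (hint1 : MeasureTheory.IntegrableOn f (Set.Ioo 0 (1 - ε)))
    (hint2 : MeasureTheory.IntegrableOn
      (fun x => x ^ ((3 : ℝ) / 2) * Real.sqrt (x - a) * deriv f x)
      (Set.Ioo 0 (1 - ε))) :
    ∀ N : ℕ,
      (∫ x in (0 : ℝ)..(1 - ε), x ^ N * Real.sqrt (x / (x - a)) * f x) =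
        (1 / 2) * (a / 4) ^ N * (Nat.choose (2 * (N + 1)) (N + 1) : ℝ) *
          ((∫ x in (0 : ℝ)..(1 - ε), Real.sqrt (x / (x - a)) * f x) +
            ∑ i ∈ Finset.Icc 1 N,
              ((4 / a) ^ i / ((2 * (i : ℝ) + 1) * (Nat.choose (2 * i) i : ℝ))) *
                (Real.sqrt (1 - a - ε) * (1 - ε) ^ ((i : ℝ) + 1 / 2) * f (1 - ε) -
                  ∫ x in (0 : ℝ)..(1 - ε),
                    x ^ i * Real.sqrt (x * (x - a)) * deriv f x)) := by
  have hb : 0 < 1 - ε := by linarith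
  have hrec := integral_pow_mul_sqrt_div_sub_recurrence ha hb
    (fun x hx => hdiff x ⟨hx.1, by linarith [hx.2]⟩)
    ((intervalIntegrable_iff_integrableOn_Ioo_of_le hb.le).2 hint1)
    ((intervalIntegrable_iff_integrableOn_Ioo_of_le hb.le).2 hint2)
  intro N
  simpa only [pow_zero, one_mul] using eq_centralBinom_mul_of_recurrence ha.ne
    (fun j => ∫ x in (0 : ℝ)..(1 - ε), x ^ j * √(x / (x - a)) * f x)
    (fun i => √(1 - a - ε) * (1 - ε) ^ ((i : ℝ) + 1 / 2) * f (1 - ε)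
      - ∫ x in (0 : ℝ)..(1 - ε), x ^ i * √(x * (x - a)) * deriv f x)
    (fun j => by
      have h := hrec j
      rw [pow_mul_sqrt_mul_sub_eq_sqrt_sub_mul_rpow hb, sub_right_comm] at h
      push_cast at h ⊢
      linarith) N

/-- Lemma 6.4 (Transform3a): for `a < 0`, `f` continuously differentiable on
`(0,1)`, `ε ∈ (0,1)` with the stated integrability, and every `N ∈ ℕ`,
`∫_0^{1-ε} x^N·√(x/(x-a))·f(x) dx = (1/2)·(a/4)^N·C(2(N+1),N+1) ·
  ( ∫_0^{1-ε} √(x/(x-a))·f(x) dx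
    + Σ_{i=1}^N ((4/a)^i/((2i+1)·C(2i,i)))·( √(1-a-ε)·(1-ε)^{i+1/2}·f(1-ε)
        - ∫_0^{1-ε} x^i·√(x(x-a))·f'(x) dx ) )`. -/
theorem stmt_16 (a : ℝ) (ha : a < 0) (f : ℝ → ℝ)
    (hdiff : ∀ t ∈ Set.Ioo (0 : ℝ) 1, DifferentiableAt ℝ f t)
    (hcont : ContinuousOn (deriv f) (Set.Ioo 0 1))
    (ε : ℝ) (hε0 : 0 < ε) (hε1 : ε < 1)
    (hint1 : MeasureTheory.IntegrableOn f (Set.Ioo 0 (1 - ε)))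
    (hint2 : MeasureTheory.IntegrableOn
      (fun x => x ^ ((3 : ℝ) / 2) * Real.sqrt (x - a) * deriv f x)
      (Set.Ioo 0 (1 - ε))) :
    ∀ N : ℕ,
      (∫ x in (0 : ℝ)..(1 - ε), x ^ N * Real.sqrt (x / (x - a)) * f x) =
        (1 / 2) * (a / 4) ^ N * (Nat.choose (2 * (N + 1)) (N + 1) : ℝ) *
          ((∫ x in (0 : ℝ)..(1 - ε), Real.sqrt (x / (x - a)) * f x) +
            ∑ i ∈ Finset.Icc 1 N,
              ((4 / a) ^ i / ((2 * (i : ℝ) + 1) * (Nat.choose (2 * i) i : ℝ))) *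
                (Real.sqrt (1 - a - ε) * (1 - ε) ^ ((i : ℝ) + 1 / 2) * f (1 - ε) -
                  ∫ x in (0 : ℝ)..(1 - ε),
                    x ^ i * Real.sqrt (x * (x - a)) * deriv f x)) :=
  stmt_16_general a ha f hdiff ε hε0 hε1 hint1 hint2
end
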